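/- arXiv:2502.13238 — 5 statements merged into one kernel-verified Lean document; each statement's English description precedes it below -/
import Mathlib

section
/- Fix 0 ≤ β < 1 and h ≠ 0, and let π be the unique real solution of x = tanh(βx + h). Then there exists a constant C > 0 (depending only on β and h) such that for every n ≥ 1, |E_{β,h,n}[W_1] − π| ≤ C/n, where W = (W_1,…,W_n) is distributed according to the Curie–Weiss model with parameters (β,h) on n sites. -/
/-!
Conditionally on the other spins, spin `i` has mean `tanh (β Sᵢ / n + h)`, where `Sᵢ` is the
magnetization of the other spins: pair each configuration with the one where spin `i` is flipped.
Since `tanh` is 1-Lipschitz and `tanh' = 1 - tanh²` is 2-Lipschitz, this gives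
`E σᵢ = tanh (β m + h) + O(1/n) + O(Var X / n²)` with `X` the magnetization and `m = E X / n`.
The same identity gives `Cov(σᵢ, Sᵢ) = Cov(tanh (β Sᵢ / n + h), Sᵢ) ≤ (β / n) Var Sᵢ`, and summing
over `i` yields `Var X ≤ n / (1 - β)`. So each `E σᵢ`, hence also their average `m`, is within
`O(1/n)` of `tanh (β m + h)`; as `x ↦ tanh (β x + h)` is a `β`-contraction, `m` and every `E σᵢ`
are within `O(1/n)` of its fixed point.
-/

open MeasureTheory Real

/-- Spin value of a Boolean: `true ↦ 1`, `false ↦ -1`. -/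
noncomputable def spin (b : Bool) : ℝ := if b then 1 else -1

/-- Unnormalized Curie–Weiss weight of a configuration. -/
noncomputable def cwWeight (n : ℕ) (β h : ℝ) (w : Fin n → Bool) : ℝ :=
  Real.exp ((β / n) * ∑ i : Fin n, ∑ j : Fin n,
      (if i < j then spin (w i) * spin (w j) else 0)
    + h * ∑ i : Fin n, spin (w i))

/-- Curie–Weiss probability of a configuration. -/
noncomputable def cwProb (n : ℕ) (β h : ℝ) (w : Fin n → Bool) : ℝ :=
  cwWeight n β h w / ∑ w' : Fin n → Bool, cwWeight n β h w'

noncomputable section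

namespace CurieWeiss

lemma abs_sub_sub_deriv_mul_le {f f' : ℝ → ℝ} {K : ℝ} (hf : ∀ x, HasDerivAt f (f' x) x)
    (hf' : ∀ x y, |f' x - f' y| ≤ K * |x - y|) (x y : ℝ) :
    |f x - f y - f' y * (x - y)| ≤ K * (x - y) ^ 2 := by
  have hK : 0 ≤ K := by simpa using (abs_nonneg _).trans (hf' 1 0)
  have key := Convex.norm_image_sub_le_of_norm_hasDerivWithin_le
    (f := fun z => f z - f' y * z) (C := K * |x - y|)
    (fun z _ => ((hf z).sub ((hasDerivAt_id z).const_mul (f' y))).hasDerivWithinAt)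
    (fun z hz => ?_) (convex_uIcc y x) Set.left_mem_uIcc Set.right_mem_uIcc
  · simp only [norm_eq_abs] at key
    calc |f x - f y - f' y * (x - y)| = |f x - f' y * x - (f y - f' y * y)| := by ring_nf
      _ ≤ K * |x - y| * |x - y| := key
      _ = K * (x - y) ^ 2 := by rw [mul_assoc, abs_mul_abs_self]; ring
  · simp only [mul_one, norm_eq_abs]
    calc |f' z - f' y| ≤ K * |z - y| := hf' z y
      _ ≤ K * |x - y| := by
        refine mul_le_mul_of_nonneg_left ?_ hK
        simpa only [abs_sub_comm] using Set.abs_sub_left_of_mem_uIcc hz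

lemma hasDerivAt_tanh (x : ℝ) : HasDerivAt tanh (1 - tanh x ^ 2) x := by
  have h := (hasDerivAt_sinh x).div (hasDerivAt_cosh x) (cosh_pos x).ne'
  rw [show tanh = sinh / cosh from funext tanh_eq_sinh_div_cosh]
  refine h.congr_deriv ?_
  rw [Pi.div_apply]
  field_simp

lemma abs_tanh_le_one (x : ℝ) : |tanh x| ≤ 1 :=
  abs_le.2 ⟨(neg_one_lt_tanh x).le, (tanh_lt_one x).le⟩

lemma abs_tanh_sub_tanh_le (a b : ℝ) : |tanh a - tanh b| ≤ |a - b| := by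
  have := Convex.norm_image_sub_le_of_norm_hasDerivWithin_le (s := Set.univ) (C := 1)
    (fun x _ => (hasDerivAt_tanh x).hasDerivWithinAt) (fun x _ => ?_) convex_univ
    (Set.mem_univ b) (Set.mem_univ a)
  · simpa using this
  · have := abs_tanh_le_one x
    rw [norm_eq_abs, abs_le]
    constructor <;> nlinarith [abs_nonneg (tanh x), sq_abs (tanh x)]

lemma abs_one_sub_tanh_sq_sub_le (a b : ℝ) :
    |(1 - tanh a ^ 2) - (1 - tanh b ^ 2)| ≤ 2 * |a - b| := by
  calc |(1 - tanh a ^ 2) - (1 - tanh b ^ 2)| = |tanh a + tanh b| * |tanh a - tanh b| := by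
        rw [← abs_mul, ← abs_neg]; ring_nf
    _ ≤ 2 * |a - b| := by
        refine mul_le_mul ?_ (abs_tanh_sub_tanh_le a b) (abs_nonneg _) zero_le_two
        linarith [abs_add_le (tanh a) (tanh b), abs_tanh_le_one a, abs_tanh_le_one b]

lemma abs_tanh_sub_tanh_sub_le (x y : ℝ) :
    |tanh x - tanh y - (1 - tanh y ^ 2) * (x - y)| ≤ 2 * (x - y) ^ 2 :=
  abs_sub_sub_deriv_mul_le hasDerivAt_tanh abs_one_sub_tanh_sq_sub_le x y

lemma contractingWith_tanh_mul_add {β : ℝ} (h : ℝ) (hβ0 : 0 ≤ β) (hβ1 : β < 1) :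
    ContractingWith ⟨β, hβ0⟩ (fun x => tanh (β * x + h)) := by
  refine ⟨hβ1, LipschitzWith.of_dist_le_mul fun x y => ?_⟩
  simp only [Real.dist_eq]
  calc |tanh (β * x + h) - tanh (β * y + h)| ≤ |(β * x + h) - (β * y + h)| :=
        abs_tanh_sub_tanh_le _ _
    _ = β * |x - y| := by rw [show β * x + h - (β * y + h) = β * (x - y) by ring, abs_mul,
        abs_of_nonneg hβ0]

lemma abs_sum_div_sub_le {n : ℕ} (hn : 0 < n) {a : Fin n → ℝ} {c ε : ℝ}
    (ha : ∀ j, |a j - c| ≤ ε) : |(∑ j, a j) / n - c| ≤ ε := by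
  have hn' : (0 : ℝ) < n := Nat.cast_pos.2 hn
  rw [show (∑ j, a j) / n - c = (∑ j, (a j - c)) / n by
    rw [Finset.sum_sub_distrib, Finset.sum_const, Finset.card_univ, Fintype.card_fin,
      nsmul_eq_mul]; field_simp, abs_div, abs_of_pos hn', div_le_iff₀ hn']
  calc |∑ j, (a j - c)| ≤ ∑ j, |a j - c| := Finset.abs_sum_le_sum_abs _ _
    _ ≤ ∑ _j : Fin n, ε := Finset.sum_le_sum fun j _ => ha j
    _ = ε * n := by simp [mul_comm]

lemma abs_sub_fixedPoint_le_of_forall_abs_sub_le {K : NNReal} {g : ℝ → ℝ}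
    (hg : ContractingWith K g) {x : ℝ} (hx : Function.IsFixedPt g x) {n : ℕ} (a : Fin n → ℝ)
    {ε : ℝ} (ha : ∀ j, |a j - g ((∑ j, a j) / n)| ≤ ε) (i : Fin n) :
    |a i - x| ≤ ε / (1 - K) := by
  set m := (∑ j, a j) / n
  have hK : 0 < 1 - (K : ℝ) := hg.one_sub_K_pos
  have hm : |m - g m| ≤ ε := abs_sum_div_sub_le i.pos ha
  have hmx : |m - x| ≤ ε / (1 - K) := by
    simpa only [Real.dist_eq] using (hg.dist_le_of_fixedPoint m hx).trans
      (div_le_div_of_nonneg_right (by simpa only [Real.dist_eq] using hm) hK.le)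
  calc |a i - x| ≤ |a i - g m| + |g m - g x| := by
        rw [hx.eq]; exact abs_sub_le _ _ _
    _ ≤ ε + K * (ε / (1 - K)) := by
        gcongr
        · exact ha i
        · simpa only [Real.dist_eq] using (hg.dist_le_mul m x).trans
            (mul_le_mul_of_nonneg_left (by simpa only [Real.dist_eq] using hmx) K.2)
    _ = ε / (1 - K) := by field_simp; ring

section WeightedMean

variable {Ω : Type*} [Fintype Ω] (p : Ω → ℝ)

def mean (f : Ω → ℝ) : ℝ := ∑ ω, p ω * f ω

def cov (f g : Ω → ℝ) : ℝ := mean p (fun ω => f ω * g ω) - mean p f * mean p g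

lemma mean_sub (f g : Ω → ℝ) : mean p (fun ω => f ω - g ω) = mean p f - mean p g := by
  simp only [mean, mul_sub, Finset.sum_sub_distrib]

lemma mean_const_mul (c : ℝ) (f : Ω → ℝ) : mean p (fun ω => c * f ω) = c * mean p f := by
  simp only [mean, Finset.mul_sum, mul_left_comm]

lemma mean_sum {ι : Type*} (s : Finset ι) (f : ι → Ω → ℝ) :
    mean p (fun ω => ∑ i ∈ s, f i ω) = ∑ i ∈ s, mean p (f i) := by
  simp only [mean, Finset.mul_sum]
  exact Finset.sum_comm

lemma mean_const (hp1 : ∑ ω, p ω = 1) (c : ℝ) : mean p (fun _ => c) = c := by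
  simp only [mean, ← Finset.sum_mul, hp1, one_mul]

lemma mean_mono (hp0 : ∀ ω, 0 ≤ p ω) {f g : Ω → ℝ} (hfg : ∀ ω, f ω ≤ g ω) :
    mean p f ≤ mean p g :=
  Finset.sum_le_sum fun ω _ => mul_le_mul_of_nonneg_left (hfg ω) (hp0 ω)

lemma abs_mean_le (hp0 : ∀ ω, 0 ≤ p ω) (f : Ω → ℝ) : |mean p f| ≤ mean p (fun ω => |f ω|) := by
  refine (Finset.abs_sum_le_sum_abs _ _).trans (le_of_eq ?_)
  simp only [abs_mul, abs_of_nonneg (hp0 _), mean]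

lemma abs_mean_le_of_abs_le (hp0 : ∀ ω, 0 ≤ p ω) (hp1 : ∑ ω, p ω = 1) {f : Ω → ℝ} {c : ℝ}
    (hf : ∀ ω, |f ω| ≤ c) : |mean p f| ≤ c :=
  (abs_mean_le p hp0 f).trans ((mean_mono p hp0 hf).trans (mean_const p hp1 c).le)

lemma cov_comm (f g : Ω → ℝ) : cov p f g = cov p g f := by
  simp only [cov, mul_comm]

lemma cov_sub_right (f g k : Ω → ℝ) :
    cov p f (fun ω => g ω - k ω) = cov p f g - cov p f k := by
  simp only [cov, mul_sub, mean_sub]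
  ring

lemma cov_sub_left (f g k : Ω → ℝ) :
    cov p (fun ω => f ω - g ω) k = cov p f k - cov p g k := by
  rw [cov_comm, cov_sub_right, cov_comm p k, cov_comm p k]

lemma cov_sum_left {ι : Type*} (s : Finset ι) (f : ι → Ω → ℝ) (g : Ω → ℝ) :
    cov p (fun ω => ∑ i ∈ s, f i ω) g = ∑ i ∈ s, cov p (f i) g := by
  simp only [cov, Finset.sum_mul, mean_sum, Finset.sum_sub_distrib]

lemma mean_sub_mean_sq (hp1 : ∑ ω, p ω = 1) (f : Ω → ℝ) :
    mean p (fun ω => (f ω - mean p f) ^ 2) = cov p f f := by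
  have h : ∀ ω, (f ω - mean p f) ^ 2 = f ω * f ω - (2 * mean p f * f ω - mean p f ^ 2) :=
    fun ω => by ring
  simp only [h, mean_sub, mean_const_mul, mean_const p hp1, cov]
  ring

lemma cov_self_nonneg (hp0 : ∀ ω, 0 ≤ p ω) (hp1 : ∑ ω, p ω = 1) (f : Ω → ℝ) :
    0 ≤ cov p f f := by
  rw [← mean_sub_mean_sq p hp1, ← mean_const p hp1 0]
  exact mean_mono p hp0 fun ω => sq_nonneg _

lemma cov_self_le_of_abs_le (hp0 : ∀ ω, 0 ≤ p ω) (hp1 : ∑ ω, p ω = 1) {f : Ω → ℝ} {c : ℝ}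
    (hf : ∀ ω, |f ω| ≤ c) : cov p f f ≤ c ^ 2 := by
  have hsq : mean p (fun ω => f ω * f ω) ≤ c ^ 2 := by
    rw [← mean_const p hp1 (c ^ 2)]
    refine mean_mono p hp0 fun ω => ?_
    rw [← abs_mul_abs_self, sq]
    exact mul_le_mul (hf ω) (hf ω) (abs_nonneg _) ((abs_nonneg _).trans (hf ω))
  unfold cov
  nlinarith [sq_nonneg (mean p f)]

lemma two_mul_cov_eq_sum_sum (hp1 : ∑ ω, p ω = 1) (f g : Ω → ℝ) :
    2 * cov p f g = ∑ ω, ∑ ω', p ω * p ω' * ((f ω - f ω') * (g ω - g ω')) := by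
  have h : ∀ ω ω', p ω * p ω' * ((f ω - f ω') * (g ω - g ω'))
      = p ω * (f ω * g ω) * p ω' + p ω * (p ω' * (f ω' * g ω'))
        - p ω * f ω * (p ω' * g ω') - p ω * g ω * (p ω' * f ω') := fun _ _ => by ring
  simp only [h, Finset.sum_add_distrib, Finset.sum_sub_distrib, ← Finset.mul_sum,
    ← Finset.sum_mul, hp1]
  simp only [cov, mean]
  ring

lemma cov_le_of_forall_mul_sub_le (hp0 : ∀ ω, 0 ≤ p ω) (hp1 : ∑ ω, p ω = 1) {f g : Ω → ℝ}
    {L : ℝ} (hfg : ∀ ω ω', (f ω - f ω') * (g ω - g ω') ≤ L * ((g ω - g ω') * (g ω - g ω'))) :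
    cov p f g ≤ L * cov p g g := by
  suffices 2 * cov p f g ≤ L * (2 * cov p g g) by linarith
  rw [two_mul_cov_eq_sum_sum p hp1, two_mul_cov_eq_sum_sum p hp1, Finset.mul_sum]
  refine Finset.sum_le_sum fun ω _ => ?_
  rw [Finset.mul_sum]
  refine Finset.sum_le_sum fun ω' _ => ?_
  have hpp := mul_nonneg (hp0 ω) (hp0 ω')
  nlinarith [mul_le_mul_of_nonneg_left (hfg ω ω') hpp]

lemma abs_mean_comp_sub_comp_mean_le (hp0 : ∀ ω, 0 ≤ p ω) (hp1 : ∑ ω, p ω = 1)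
    (X : Ω → ℝ) {g : ℝ → ℝ} {d K : ℝ}
    (hg : ∀ y, |g y - g (mean p X) - d * (y - mean p X)| ≤ K * (y - mean p X) ^ 2) :
    |mean p (fun ω => g (X ω)) - g (mean p X)| ≤ K * cov p X X := by
  have hlin : mean p (fun ω => g (X ω)) - g (mean p X)
      = mean p (fun ω => g (X ω) - g (mean p X) - d * (X ω - mean p X)) := by
    rw [mean_sub, mean_sub, mean_const p hp1, mean_const_mul, mean_sub, mean_const p hp1]
    ring
  rw [hlin, ← mean_sub_mean_sq p hp1, ← mean_const_mul]
  exact (abs_mean_le p hp0 _).trans (mean_mono p hp0 fun ω => hg (X ω))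

end WeightedMean

lemma sum_sum_ite_lt_mul {ι : Type*} [Fintype ι] [LinearOrder ι] (s : ι → ℝ) :
    ∑ i, ∑ j, (if i < j then s i * s j else 0) = ((∑ i, s i) ^ 2 - ∑ i, s i ^ 2) / 2 := by
  have hsplit : ∀ i j, s i * s j = (if i < j then s i * s j else 0)
      + (if j < i then s j * s i else 0) + (if i = j then s i ^ 2 else 0) := by
    intro i j
    rcases lt_trichotomy i j with hij | rfl | hij
    · rw [if_pos hij, if_neg (not_lt_of_gt hij), if_neg hij.ne]; ring
    · simp [sq]
    · rw [if_neg (not_lt_of_gt hij), if_pos hij, if_neg hij.ne']; ring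
  have hsq : (∑ i, s i) ^ 2 = 2 * ∑ i, ∑ j, (if i < j then s i * s j else 0) + ∑ i, s i ^ 2 := by
    rw [sq, Finset.sum_mul_sum,
      Finset.sum_congr rfl fun i _ => Finset.sum_congr rfl fun j _ => hsplit i j]
    simp only [Finset.sum_add_distrib, Finset.sum_ite_eq, Finset.mem_univ, if_true]
    rw [Finset.sum_comm (f := fun i j => if j < i then s j * s i else 0)]
    ring
  linarith

lemma spin_sq (b : Bool) : spin b ^ 2 = 1 := by cases b <;> simp [spin]

lemma abs_spin (b : Bool) : |spin b| = 1 := by cases b <;> simp [spin]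

variable {n : ℕ} (β h : ℝ)

def magnetization (w : Fin n → Bool) : ℝ := ∑ i, spin (w i)

def magnetizationExcept (i : Fin n) (w : Fin n → Bool) : ℝ := magnetization w - spin (w i)

lemma cwWeight_eq (w : Fin n → Bool) :
    cwWeight n β h w = exp (β / n * (magnetization w ^ 2 - n) / 2 + h * magnetization w) := by
  simp only [cwWeight, sum_sum_ite_lt_mul, spin_sq, Finset.sum_const, Finset.card_univ,
    Fintype.card_fin, nsmul_eq_mul, mul_one, magnetization]
  ring_nf

lemma cwWeight_eq_exp_spin_mul (i : Fin n) (w : Fin n → Bool) :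
    cwWeight n β h w = exp (β / n * (magnetizationExcept i w ^ 2 + 1 - n) / 2
      + h * magnetizationExcept i w + spin (w i) * (β / n * magnetizationExcept i w + h)) := by
  rw [cwWeight_eq, magnetizationExcept]
  congr 1
  linear_combination (β / n / 2) * spin_sq (w i)

lemma magnetization_update (w : Fin n → Bool) (i : Fin n) (b : Bool) :
    magnetization (Function.update w i b) = magnetization w - spin (w i) + spin b := by
  have hupd := Finset.sum_update_of_mem (Finset.mem_univ i) (spin ∘ w) (spin b)
  have hrest := Finset.add_sum_erase Finset.univ (spin ∘ w) (Finset.mem_univ i)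
  rw [← Function.comp_update, Finset.sdiff_singleton_eq_erase] at hupd
  simp only [magnetization, Function.comp_apply] at hupd hrest ⊢
  linarith

lemma magnetizationExcept_update (w : Fin n → Bool) (i : Fin n) (b : Bool) :
    magnetizationExcept i (Function.update w i b) = magnetizationExcept i w := by
  rw [magnetizationExcept, magnetizationExcept, magnetization_update, Function.update_self]
  ring

lemma exp_add_spin_mul_sub_tanh (A t : ℝ) (b : Bool) :
    exp (A + spin b * t) * (spin b - tanh t) + exp (A + spin (!b) * t) * (spin (!b) - tanh t)
      = 0 := by
  cases b <;>
  · simp only [spin, Bool.not_false, Bool.not_true, if_true, Bool.false_eq_true, if_false,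
      neg_one_mul, one_mul, exp_add, tanh_eq, exp_neg]
    field_simp
    ring

lemma sum_cwWeight_mul_spin_sub_tanh (i : Fin n) (φ : ℝ → ℝ) :
    ∑ w, cwWeight n β h w * ((spin (w i) - tanh (β / n * magnetizationExcept i w + h))
      * φ (magnetizationExcept i w)) = 0 := by
  refine Finset.sum_involution (fun w _ => Function.update w i (!w i)) (fun w _ => ?_)
    (fun w _ _ hw => ?_) (fun _ _ => Finset.mem_univ _) (fun w _ => by simp)
  · -- flipping spin `i` negates it and fixes `magnetizationExcept i`, so the two terms cancel
    simp only [cwWeight_eq_exp_spin_mul β h i, magnetizationExcept_update, Function.update_self]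
    linear_combination φ (magnetizationExcept i w) * exp_add_spin_mul_sub_tanh _ _ (w i)
  · simpa using congrFun hw i

lemma cwProb_nonneg (w : Fin n → Bool) : 0 ≤ cwProb n β h w :=
  div_nonneg (exp_pos _).le (Finset.sum_nonneg fun _ _ => (exp_pos _).le)

lemma sum_cwProb : ∑ w, cwProb n β h w = 1 := by
  simp only [cwProb, ← Finset.sum_div]
  exact div_self (Finset.sum_pos (fun _ _ => exp_pos _) Finset.univ_nonempty).ne'

lemma mean_spin_mul (i : Fin n) (φ : ℝ → ℝ) :
    mean (cwProb n β h) (fun w => spin (w i) * φ (magnetizationExcept i w))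
      = mean (cwProb n β h)
          (fun w => tanh (β / n * magnetizationExcept i w + h) * φ (magnetizationExcept i w)) := by
  rw [← sub_eq_zero, ← mean_sub]
  calc mean (cwProb n β h) _
      = (∑ w, cwWeight n β h w * ((spin (w i) - tanh (β / n * magnetizationExcept i w + h))
          * φ (magnetizationExcept i w))) / ∑ w, cwWeight n β h w := by
        rw [mean, Finset.sum_div]
        refine Finset.sum_congr rfl fun w _ => ?_
        rw [cwProb]
        ring
    _ = 0 := by rw [sum_cwWeight_mul_spin_sub_tanh, zero_div]

lemma mean_spin (i : Fin n) :
    mean (cwProb n β h) (fun w => spin (w i))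
      = mean (cwProb n β h) (fun w => tanh (β / n * magnetizationExcept i w + h)) := by
  simpa only [mul_one] using mean_spin_mul β h i (fun _ => 1)

lemma cov_spin_magnetizationExcept_le (hβ : 0 ≤ β) (i : Fin n) :
    cov (cwProb n β h) (fun w => spin (w i)) (magnetizationExcept i)
      ≤ β / n * cov (cwProb n β h) (magnetizationExcept i) (magnetizationExcept i) := by
  have hcov : cov (cwProb n β h) (fun w => spin (w i)) (magnetizationExcept i)
      = cov (cwProb n β h) (fun w => tanh (β / n * magnetizationExcept i w + h))
          (magnetizationExcept i) := by
    have hmul := mean_spin_mul β h i (fun x => x)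
    beta_reduce at hmul
    rw [cov, cov, hmul, mean_spin β h i]
  rw [hcov]
  refine cov_le_of_forall_mul_sub_le _ (cwProb_nonneg β h) (sum_cwProb β h) fun w w' => ?_
  set x := magnetizationExcept i w
  set y := magnetizationExcept i w'
  calc (tanh (β / n * x + h) - tanh (β / n * y + h)) * (x - y)
      ≤ |tanh (β / n * x + h) - tanh (β / n * y + h)| * |x - y| := by
        rw [← abs_mul]; exact le_abs_self _
    _ ≤ |(β / n * x + h) - (β / n * y + h)| * |x - y| := by
        exact mul_le_mul_of_nonneg_right (abs_tanh_sub_tanh_le _ _) (abs_nonneg _)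
    _ = β / n * ((x - y) * (x - y)) := by
        rw [show β / n * x + h - (β / n * y + h) = β / n * (x - y) by ring, abs_mul,
          abs_of_nonneg (by positivity : 0 ≤ β / n), mul_assoc, abs_mul_abs_self]

lemma cov_spin_magnetization_le (hβ : 0 ≤ β) (i : Fin n) :
    cov (cwProb n β h) (fun w => spin (w i)) magnetization
      ≤ 1 + β / n * cov (cwProb n β h) magnetization magnetization := by
  have hp0 := cwProb_nonneg (n := n) β h
  have hp1 := sum_cwProb (n := n) β h
  set p := cwProb n β h
  set σ : (Fin n → Bool) → ℝ := fun w => spin (w i)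
  have hS : magnetizationExcept i = fun w => magnetization w - σ w := rfl
  have hcS := cov_spin_magnetizationExcept_le β h hβ i
  rw [hS, cov_sub_right, cov_sub_left, cov_sub_right, cov_sub_right, cov_comm p magnetization σ]
    at hcS
  have hv0 : 0 ≤ cov p σ σ := cov_self_nonneg p hp0 hp1 σ
  have hv1 : cov p σ σ ≤ 1 := by
    simpa using cov_self_le_of_abs_le p hp0 hp1 (f := σ) fun w => (abs_spin (w i)).le
  have hV0 : 0 ≤ cov p magnetization magnetization := cov_self_nonneg p hp0 hp1 _
  have hq : 0 ≤ β / n := by positivity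
  -- with `c = Cov(σ, X)`, `v = Var σ ∈ [0, 1]`, `V = Var X ≥ 0`, `hcS` reads
  -- `c - v ≤ (β / n) (V - 2 c + v)`, which forces `c ≤ 1 + (β / n) V`
  nlinarith [mul_nonneg hq hV0, mul_nonneg (mul_nonneg hq hq) hV0, mul_nonneg hq hv0,
    mul_nonneg hq (sub_nonneg.2 hv1)]

lemma cov_magnetization_le (hβ0 : 0 ≤ β) (hβ1 : β < 1) :
    cov (cwProb n β h) magnetization magnetization ≤ n / (1 - β) := by
  set V := cov (cwProb n β h) magnetization magnetization
  have hsum : V = ∑ i, cov (cwProb n β h) (fun w => spin (w i)) magnetization :=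
    cov_sum_left _ _ _ _
  have hle : V ≤ n + n * (β / n) * V := by
    calc V ≤ ∑ _i : Fin n, (1 + β / n * V) :=
          hsum.trans_le (Finset.sum_le_sum fun i _ => cov_spin_magnetization_le β h hβ0 i)
      _ = n + n * (β / n) * V := by simp only [Finset.sum_const, Finset.card_univ,
          Fintype.card_fin, nsmul_eq_mul]; ring
  have hnq : (n : ℝ) * (β / n) ≤ β := by
    rcases eq_or_ne (n : ℝ) 0 with h0 | h0
    · simp [h0, hβ0]
    · rw [mul_div_cancel₀ _ h0]
  have hV0 : 0 ≤ V := cov_self_nonneg _ (cwProb_nonneg β h) (sum_cwProb β h) _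
  rw [le_div_iff₀ (by linarith)]
  nlinarith [mul_le_mul_of_nonneg_right hnq hV0]

lemma abs_mean_spin_sub_mean_tanh_le (hβ : 0 ≤ β) (i : Fin n) :
    |mean (cwProb n β h) (fun w => spin (w i))
      - mean (cwProb n β h) (fun w => tanh (β / n * magnetization w + h))| ≤ β / n := by
  rw [mean_spin, ← mean_sub]
  refine abs_mean_le_of_abs_le _ (cwProb_nonneg β h) (sum_cwProb β h) fun w => ?_
  calc |tanh (β / n * magnetizationExcept i w + h) - tanh (β / n * magnetization w + h)|
      ≤ |(β / n * magnetizationExcept i w + h) - (β / n * magnetization w + h)| :=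
        abs_tanh_sub_tanh_le _ _
    _ = β / n := by
        rw [magnetizationExcept, show ∀ a b c : ℝ, a * (b - c) + h - (a * b + h) = -(a * c) by
          intros; ring, abs_neg, abs_mul, abs_spin, mul_one, abs_of_nonneg (by positivity)]

lemma abs_mean_tanh_sub_tanh_mean_le :
    |mean (cwProb n β h) (fun w => tanh (β / n * magnetization w + h))
      - tanh (β / n * mean (cwProb n β h) magnetization + h)|
      ≤ 2 * (β / n) ^ 2 * cov (cwProb n β h) magnetization magnetization := by
  refine abs_mean_comp_sub_comp_mean_le _ (cwProb_nonneg β h) (sum_cwProb β h) magnetization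
    (g := fun y => tanh (β / n * y + h))
    (d := (1 - tanh (β / n * mean (cwProb n β h) magnetization + h) ^ 2) * (β / n)) fun y => ?_
  have := abs_tanh_sub_tanh_sub_le (β / n * y + h) (β / n * mean (cwProb n β h) magnetization + h)
  convert this using 1
  · congr 1; ring
  · ring

lemma abs_mean_spin_sub_tanh_le (hβ0 : 0 ≤ β) (hβ1 : β < 1) (i : Fin n) :
    |mean (cwProb n β h) (fun w => spin (w i))
      - tanh (β / n * mean (cwProb n β h) magnetization + h)|
      ≤ β * (1 + β) / ((1 - β) * n) := by
  have hn : (0 : ℝ) < n := Nat.cast_pos.2 i.pos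
  have hβ1' : 0 < 1 - β := by linarith
  calc _ ≤ β / n + 2 * (β / n) ^ 2 * (n / (1 - β)) :=
        (abs_sub_le _ _ _).trans (add_le_add (abs_mean_spin_sub_mean_tanh_le β h hβ0 i)
          ((abs_mean_tanh_sub_tanh_mean_le β h).trans (by
            gcongr; exact cov_magnetization_le β h hβ0 hβ1)))
    _ = β * (1 + β) / ((1 - β) * n) := by field_simp; ring

end CurieWeiss

end

open CurieWeiss in
theorem stmt1_general (β h : ℝ) (hβ0 : 0 ≤ β) (hβ1 : β < 1)
    (pfix : ℝ) (hpfix : pfix = Real.tanh (β * pfix + h)) :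
    ∃ C > 0, ∀ (n : ℕ) (hn : 0 < n),
      |(∑ w : Fin n → Bool, cwProb n β h w * spin (w ⟨0, hn⟩)) - pfix| ≤ C / n := by
  have hβ1' : 0 < 1 - β := by linarith
  refine ⟨2 / (1 - β) ^ 2, by positivity, fun n hn => ?_⟩
  have hspin : ∀ i : Fin n, |mean (cwProb n β h) (fun w => spin (w i))
      - tanh (β * ((∑ j, mean (cwProb n β h) (fun w => spin (w j))) / n) + h)|
      ≤ β * (1 + β) / ((1 - β) * n) := fun i => by
    have hX : ∑ j, mean (cwProb n β h) (fun w => spin (w j))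
        = mean (cwProb n β h) magnetization := (mean_sum _ _ _).symm
    rw [hX, show β * (mean (cwProb n β h) magnetization / n)
      = β / n * mean (cwProb n β h) magnetization by ring]
    exact abs_mean_spin_sub_tanh_le β h hβ0 hβ1 i
  refine (abs_sub_fixedPoint_le_of_forall_abs_sub_le (contractingWith_tanh_mul_add h hβ0 hβ1)
    hpfix.symm _ hspin ⟨0, hn⟩).trans ?_
  show _ / (1 - β) ≤ _
  calc β * (1 + β) / ((1 - β) * n) / (1 - β) = β * (1 + β) / (1 - β) ^ 2 / n := by
        field_simp
    _ ≤ 2 / (1 - β) ^ 2 / n := by gcongr; nlinarith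

/-- In the high-temperature regime with nonzero external field, the mean of a single spin
is within `C/n` of the fixed point `π` of `x = tanh(βx + h)`. -/
theorem stmt1 (β h : ℝ) (hβ0 : 0 ≤ β) (hβ1 : β < 1) (hh : h ≠ 0)
    (pfix : ℝ) (hpfix : pfix = Real.tanh (β * pfix + h)) :
    ∃ C > 0, ∀ (n : ℕ) (hn : 0 < n),
      |(∑ w : Fin n → Bool, cwProb n β h w * spin (w ⟨0, hn⟩)) - pfix| ≤ C / n :=
  stmt1_general β h hβ0 hβ1 pfix hpfix
end

section
/- For β ∈ [0,1] define F_β(v) = −v²/2 + log cosh(√β·v). Then for every n ≥ 1, every t > 0, and every 0 ≤ β₁ < β₂ ≤ 1, the normalized tail masses satisfy ( ∫_t^∞ exp(n·F_{β₁}(v)) dv ) / ( ∫_0^∞ exp(n·F_{β₁}(v)) dv ) ≤ ( ∫_t^∞ exp(n·F_{β₂}(v)) dv ) / ( ∫_0^∞ exp(n·F_{β₂}(v)) dv ). Equivalently, if W_n^{(β)} denotes a random variable with density on ℝ proportional to exp(n·F_β(|v|)) (symmetric), then P(|W_n^{(β)}| ≥ t) is nondecreasing in β ∈ [0,1] for every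 fixed n and t > 0. -/
open MeasureTheory Real

/-!
Since the `-v²/2` terms cancel,
`exp (n F_{β₂}) / exp (n F_{β₁}) = (cosh (√β₂ v) / cosh (√β₁ v)) ^ n`, and this likelihood
ratio is nondecreasing in `v ≥ 0`: `log cosh (a v)` is supermodular in `(a, v)`, as one sees
from `2 cosh x cosh y = cosh (x + y) + cosh (x - y)`. A density with a nondecreasing
likelihood ratio against another puts relatively more mass on every tail: after
cross-multiplying, the claim becomes `∫_T f · ∫_{S∖T} g ≤ ∫_T g · ∫_{S∖T} f`, which is the
pointwise inequality `f w g v ≤ g w f v` for `w ∈ T`, `v ∈ S∖T`, integrated in both variables.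
-/

/-- `F_β(v) = −v²/2 + log cosh(√β·v)`. -/
noncomputable def Fcw (β v : ℝ) : ℝ := -v ^ 2 / 2 + Real.log (Real.cosh (Real.sqrt β * v))

section TailRatio

variable {α : Type*} [MeasurableSpace α] {μ : Measure α} {f g : α → ℝ} {s t : Set α}

theorem setIntegral_mul_setIntegral_le (hs : MeasurableSet s) (ht : MeasurableSet t)
    (hfs : IntegrableOn f s μ) (hgs : IntegrableOn g s μ)
    (hft : IntegrableOn f t μ) (hgt : IntegrableOn g t μ)
    (h : ∀ x ∈ s, ∀ y ∈ t, f x * g y ≤ g x * f y) :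
    (∫ x in s, f x ∂μ) * (∫ y in t, g y ∂μ) ≤ (∫ x in s, g x ∂μ) * (∫ y in t, f y ∂μ) := by
  have hpointwise : ∀ x ∈ s, f x * ∫ y in t, g y ∂μ ≤ g x * ∫ y in t, f y ∂μ := by
    intro x hx
    rw [← integral_const_mul, ← integral_const_mul]
    exact setIntegral_mono_on (hgt.const_mul _) (hft.const_mul _) ht (h x hx)
  calc (∫ x in s, f x ∂μ) * (∫ y in t, g y ∂μ)
      = ∫ x in s, f x * ∫ y in t, g y ∂μ ∂μ := (integral_mul_const _ _).symm
    _ ≤ ∫ x in s, g x * ∫ y in t, f y ∂μ ∂μ :=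
        setIntegral_mono_on (hfs.mul_const _) (hgs.mul_const _) hs hpointwise
    _ = (∫ x in s, g x ∂μ) * (∫ y in t, f y ∂μ) := integral_mul_const _ _

theorem setIntegral_div_setIntegral_le (hs : MeasurableSet s) (ht : MeasurableSet t)
    (hts : t ⊆ s) (hf : IntegrableOn f s μ) (hg : IntegrableOn g s μ)
    (hf_pos : 0 < ∫ x in s, f x ∂μ) (hg_pos : 0 < ∫ x in s, g x ∂μ)
    (h : ∀ x ∈ t, ∀ y ∈ s \ t, f x * g y ≤ g x * f y) :
    (∫ x in t, f x ∂μ) / (∫ x in s, f x ∂μ) ≤ (∫ x in t, g x ∂μ) / (∫ x in s, g x ∂μ) := by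
  have key := setIntegral_mul_setIntegral_le ht (hs.diff ht) (hf.mono_set hts)
    (hg.mono_set hts) (hf.mono_set Set.sdiff_subset) (hg.mono_set Set.sdiff_subset) h
  rw [setIntegral_sdiff ht hf hts, setIntegral_sdiff ht hg hts] at key
  rw [div_le_div_iff₀ hf_pos hg_pos]
  linarith

end TailRatio

theorem cosh_mul_cosh_le_cosh_mul_cosh {a b x y : ℝ} (ha : 0 ≤ a) (hab : a ≤ b)
    (hx : 0 ≤ x) (hxy : x ≤ y) :
    cosh (a * y) * cosh (b * x) ≤ cosh (a * x) * cosh (b * y) := by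
  have prod_eq (u w : ℝ) : 2 * (cosh u * cosh w) = cosh (u + w) + cosh (u - w) := by
    rw [cosh_add, cosh_sub]; ring
  have hb : 0 ≤ b := ha.trans hab
  have hy : 0 ≤ y := hx.trans hxy
  have hsum : cosh (a * y + b * x) ≤ cosh (b * y + a * x) := by
    rw [cosh_le_cosh, abs_of_nonneg (by positivity), abs_of_nonneg (by positivity)]
    nlinarith [mul_nonneg (sub_nonneg.2 hab) (sub_nonneg.2 hxy)]
  have hdiff : cosh (a * y - b * x) ≤ cosh (b * y - a * x) := by
    rw [cosh_le_cosh, abs_of_nonneg (show 0 ≤ b * y - a * x by nlinarith), abs_le]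
    constructor <;> nlinarith
  have h₁ := prod_eq (a * y) (b * x)
  have h₂ := prod_eq (b * y) (a * x)
  linarith [mul_comm (cosh (a * x)) (cosh (b * y))]

theorem Fcw_add_Fcw_le {β₁ β₂ v w : ℝ} (hβ : β₁ ≤ β₂) (hv : 0 ≤ v) (hvw : v ≤ w) :
    Fcw β₁ w + Fcw β₂ v ≤ Fcw β₂ w + Fcw β₁ v := by
  have hcosh := cosh_mul_cosh_le_cosh_mul_cosh (sqrt_nonneg β₁) (sqrt_le_sqrt hβ) hv hvw
  have hlog := log_le_log (by positivity) hcosh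
  rw [log_mul (cosh_pos _).ne' (cosh_pos _).ne', log_mul (cosh_pos _).ne' (cosh_pos _).ne'] at hlog
  unfold Fcw
  linarith

theorem exp_mul_Fcw_mul_le {β₁ β₂ v w : ℝ} (n : ℕ) (hβ : β₁ ≤ β₂) (hv : 0 ≤ v) (hvw : v ≤ w) :
    exp (n * Fcw β₁ w) * exp (n * Fcw β₂ v) ≤ exp (n * Fcw β₂ w) * exp (n * Fcw β₁ v) := by
  rw [← exp_add, ← exp_add, exp_le_exp, ← mul_add, ← mul_add]
  exact mul_le_mul_of_nonneg_left (Fcw_add_Fcw_le hβ hv hvw) n.cast_nonneg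

theorem Fcw_le {β : ℝ} (hβ : β ≤ 1) {v : ℝ} (hv : 0 ≤ v) : Fcw β v ≤ -v ^ 2 / 2 + v := by
  have hx : 0 ≤ sqrt β * v := by positivity
  have hlog : log (cosh (sqrt β * v)) ≤ sqrt β * v := by
    rw [log_le_iff_le_exp (cosh_pos _), ← cosh_add_sinh]
    linarith [sinh_nonneg_iff.2 hx]
  have hsqrt : sqrt β * v ≤ v := mul_le_of_le_one_left hv (sqrt_le_one.2 hβ)
  unfold Fcw
  linarith

@[fun_prop]
theorem continuous_Fcw (β : ℝ) : Continuous (Fcw β) := by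
  unfold Fcw
  fun_prop (disch := exact fun v => (cosh_pos _).ne')

theorem integrableOn_exp_mul_Fcw {n : ℕ} (hn : 1 ≤ n) {β : ℝ} (hβ : β ≤ 1) :
    IntegrableOn (fun v => exp (n * Fcw β v)) (Set.Ioi 0) := by
  have hn' : (0 : ℝ) < n / 2 := half_pos (Nat.cast_pos.2 hn)
  -- `n (-v²/2 + v) = n/2 - (n/2) (v - 1)²`
  have hgauss : Integrable (fun v : ℝ => exp (n / 2) * exp (-(n / 2) * (v - 1) ^ 2)) :=
    ((integrable_exp_neg_mul_sq hn').comp_sub_right 1).const_mul _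
  refine hgauss.integrableOn.mono' (by fun_prop) ?_
  filter_upwards [ae_restrict_mem measurableSet_Ioi] with v (hv : 0 < v)
  rw [norm_of_nonneg (exp_pos _).le, ← exp_add, exp_le_exp]
  have := mul_le_mul_of_nonneg_left (Fcw_le hβ hv.le) n.cast_nonneg
  linarith

theorem stmt8_general (n : ℕ) (hn : 1 ≤ n) (t : ℝ) (ht : 0 < t)
    (β₁ β₂ : ℝ) (h12 : β₁ < β₂) (h2 : β₂ ≤ 1) :
    (∫ v in Set.Ioi t, Real.exp (n * Fcw β₁ v)) /
        (∫ v in Set.Ioi (0 : ℝ), Real.exp (n * Fcw β₁ v)) ≤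
      (∫ v in Set.Ioi t, Real.exp (n * Fcw β₂ v)) /
        (∫ v in Set.Ioi (0 : ℝ), Real.exp (n * Fcw β₂ v)) := by
  have hI₁ := integrableOn_exp_mul_Fcw hn (h12.le.trans h2)
  have hI₂ := integrableOn_exp_mul_Fcw hn h2
  have : NeZero (volume (Set.Ioi (0 : ℝ))) := ⟨by simp⟩
  refine setIntegral_div_setIntegral_le measurableSet_Ioi measurableSet_Ioi
    (Set.Ioi_subset_Ioi ht.le) hI₁ hI₂ (integral_exp_pos hI₁) (integral_exp_pos hI₂) ?_
  rintro w (hw : t < w) v ⟨hv : 0 < v, hvt⟩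
  exact exp_mul_Fcw_mul_le n h12.le hv.le ((not_lt.1 hvt).trans hw.le)

/-- The normalized tail mass of the density proportional to `exp(n F_β)` on `(0,∞)`
is nondecreasing in the inverse temperature `β ∈ [0,1]`. -/
theorem stmt8 (n : ℕ) (hn : 1 ≤ n) (t : ℝ) (ht : 0 < t)
    (β₁ β₂ : ℝ) (h1 : 0 ≤ β₁) (h12 : β₁ < β₂) (h2 : β₂ ≤ 1) :
    (∫ v in Set.Ioi t, Real.exp (n * Fcw β₁ v)) /
        (∫ v in Set.Ioi (0 : ℝ), Real.exp (n * Fcw β₁ v)) ≤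
      (∫ v in Set.Ioi t, Real.exp (n * Fcw β₂ v)) /
        (∫ v in Set.Ioi (0 : ℝ), Real.exp (n * Fcw β₂ v)) :=
  stmt8_general n hn t ht β₁ β₂ h12 h2
end

section
/- For every β > 1 the inequality √(β−1) < √β · tanh( √(β(β−1)) ) holds. Consequently, every v > 0 satisfying v = √β·tanh(√β·v) satisfies v² > β − 1; moreover for any such v one has sech²(√β·v) = 1 − v²/β, and hence 1 − β·sech²(√β·v) = 1 − β + v² > 0. -/
/-!
Since `tanh (arsinh x) = x / √(1 + x²)` and `arsinh x < x` for `x > 0`, the strict monotonicity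
of `tanh` gives `x / √(1 + x²) < tanh x`. At `x = √(β(β−1))` this yields the first inequality
because `1 + β(β−1) < β²`. At `x = √β·v` for a fixed point `v`, where `tanh x = v / √β`, it yields
`β² < 1 + βv²`, hence `v² > β − 1/β > β − 1`.
-/

open Real

theorem Real.tanh_strictMono : StrictMono tanh := by
  intro x y hxy
  rwa [← artanh_lt_artanh_iff ⟨neg_one_lt_tanh x, tanh_lt_one x⟩
    ⟨neg_one_lt_tanh y, tanh_lt_one y⟩, artanh_tanh, artanh_tanh]

theorem Real.arsinh_lt_self {x : ℝ} (hx : 0 < x) : arsinh x < x := by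
  conv_rhs => rw [← arsinh_sinh x]
  exact arsinh_lt_arsinh.mpr (self_lt_sinh_iff.mpr hx)

theorem Real.div_sqrt_one_add_sq_lt_tanh {x : ℝ} (hx : 0 < x) : x / √(1 + x ^ 2) < tanh x := by
  rw [← tanh_arsinh]
  exact tanh_strictMono (arsinh_lt_self hx)

theorem Real.sq_div_one_add_sq_lt_tanh_sq {x : ℝ} (hx : x ≠ 0) :
    x ^ 2 / (1 + x ^ 2) < tanh x ^ 2 := by
  wlog hpos : 0 < x generalizing x
  · simpa [tanh_neg] using this (neg_ne_zero.mpr hx) (by grind)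
  have h := div_sqrt_one_add_sq_lt_tanh hpos
  have := pow_lt_pow_left₀ h (by positivity) two_ne_zero
  rwa [div_pow, sq_sqrt (by positivity)] at this

theorem Real.one_div_cosh_sq (x : ℝ) : 1 / cosh x ^ 2 = 1 - tanh x ^ 2 := by
  have := cosh_pos x
  rw [tanh_eq_sinh_div_cosh, div_pow, cosh_sq]
  field_simp
  ring

theorem sqrt_sub_one_lt_sqrt_mul_tanh {β : ℝ} (hβ : 1 < β) :
    √(β - 1) < √β * tanh √(β * (β - 1)) := by
  have hx : 0 < √(β * (β - 1)) := sqrt_pos.mpr (by nlinarith)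
  have hx2 : √(β * (β - 1)) ^ 2 = β * (β - 1) := sq_sqrt (by nlinarith)
  have htanh := div_sqrt_one_add_sq_lt_tanh hx
  have hroot : √(1 + β * (β - 1)) < β := (sqrt_lt' (by linarith)).mpr (by nlinarith)
  calc √(β - 1) = √β * (√(β * (β - 1)) / β) := by
        rw [sqrt_mul (by linarith)]
        field_simp
        rw [sq_sqrt (by linarith), mul_comm]
    _ < √β * (√(β * (β - 1)) / √(1 + β * (β - 1))) := by gcongr
    _ < √β * tanh √(β * (β - 1)) := by rw [hx2] at htanh; gcongr

theorem tanh_sq_of_eq_sqrt_mul_tanh {β v : ℝ} (hβ : 0 < β) (hv : v = √β * tanh (√β * v)) :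
    tanh (√β * v) ^ 2 = v ^ 2 / β := by
  have hsβ : 0 < √β := sqrt_pos.mpr hβ
  rw [hv, mul_pow, sq_sqrt hβ.le, ← hv]
  field_simp

theorem sq_lt_one_add_mul_sq_of_eq_sqrt_mul_tanh {β v : ℝ} (hβ : 0 < β) (hv0 : v ≠ 0)
    (hv : v = √β * tanh (√β * v)) : β ^ 2 < 1 + β * v ^ 2 := by
  have h := sq_div_one_add_sq_lt_tanh_sq (mul_ne_zero (sqrt_pos.mpr hβ).ne' hv0)
  rw [tanh_sq_of_eq_sqrt_mul_tanh hβ hv, mul_pow, sq_sqrt hβ.le,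
    div_lt_div_iff₀ (by positivity) hβ] at h
  nlinarith [sq_pos_of_ne_zero hv0]

/-- For `β > 1`: `√(β−1) < √β·tanh(√(β(β−1)))`; consequently every positive fixed point
`v = √β tanh(√β v)` satisfies `v² > β − 1`, `sech²(√β v) = 1 − v²/β`, and
`1 − β·sech²(√β v) = 1 − β + v² > 0`. -/
theorem stmt11 (β : ℝ) (hβ : 1 < β) :
    Real.sqrt (β - 1) < Real.sqrt β * Real.tanh (Real.sqrt (β * (β - 1))) ∧
    ∀ v : ℝ, 0 < v → v = Real.sqrt β * Real.tanh (Real.sqrt β * v) →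
      β - 1 < v ^ 2 ∧
      1 / (Real.cosh (Real.sqrt β * v)) ^ 2 = 1 - v ^ 2 / β ∧
      1 - β * (1 / (Real.cosh (Real.sqrt β * v)) ^ 2) = 1 - β + v ^ 2 ∧
      0 < 1 - β + v ^ 2 := by
  have hβ0 : 0 < β := by linarith
  refine ⟨sqrt_sub_one_lt_sqrt_mul_tanh hβ, fun v hv hfix => ?_⟩
  have hsech : 1 / cosh (√β * v) ^ 2 = 1 - v ^ 2 / β := by
    rw [one_div_cosh_sq, tanh_sq_of_eq_sqrt_mul_tanh hβ0 hfix]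
  have hv2 : β - 1 < v ^ 2 := by
    nlinarith [sq_lt_one_add_mul_sq_of_eq_sqrt_mul_tanh hβ0 hv.ne' hfix]
  refine ⟨hv2, hsech, ?_, by linarith⟩
  rw [hsech]
  field_simp
  ring
end

section
/- For every β > 1 there exists exactly one v_+(β) > 0 such that v_+(β) = √β · tanh( √β · v_+(β) ), and the map β ↦ v_+(β) satisfies lim_{β → 1^+} v_+(β) / √(β − 1) = √3. -/
/-!
Substituting `u = √β v` turns the equation into `u = β tanh u`. Since `tanh u / u` decreases
strictly from `1` to `0` on `(0, ∞)`, this has exactly one positive solution when `β > 1`.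
The Taylor bounds `u - u³/3 ≤ tanh u ≤ u - u³/3 + 2u⁵/15` then give
`3(β - 1) ≤ β u² ≤ 3(β - 1)(1 + O(β - 1))`, so `u² / (β - 1) → 3` and
`v / √(β - 1) = √(u² / (β(β - 1))) → √3`.
-/

open Real Filter Set Topology

theorem apply_zero_le_of_hasDerivAt_nonneg {f f' : ℝ → ℝ} (hf : ∀ x, HasDerivAt f (f' x) x)
    (hf' : ∀ x, 0 < x → 0 ≤ f' x) {x : ℝ} (hx : 0 ≤ x) : f 0 ≤ f x :=
  monotoneOn_of_hasDerivWithinAt_nonneg (convex_Ici 0)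
    (fun y _ => (hf y).continuousAt.continuousWithinAt) (fun y _ => (hf y).hasDerivWithinAt)
    (by simpa using hf') self_mem_Ici hx hx

namespace Real

theorem hasDerivAt_tanh (x : ℝ) : HasDerivAt tanh (1 - tanh x ^ 2) x := by
  have hc := (cosh_pos x).ne'
  have h := (hasDerivAt_sinh x).div (hasDerivAt_cosh x) hc
  rw [show sinh / cosh = tanh from funext fun y => (tanh_eq_sinh_div_cosh y).symm] at h
  refine h.congr_deriv ?_
  rw [tanh_eq_sinh_div_cosh]
  field_simp

theorem continuous_tanh : Continuous tanh :=
  continuous_iff_continuousAt.2 fun x => (hasDerivAt_tanh x).continuousAt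

theorem tanh_nonneg {x : ℝ} (hx : 0 ≤ x) : 0 ≤ tanh x := by
  rw [tanh_eq_sinh_div_cosh]
  exact div_nonneg (sinh_nonneg_iff.2 hx) (cosh_pos x).le

theorem tanh_le_self {x : ℝ} (hx : 0 ≤ x) : tanh x ≤ x := by
  have h := apply_zero_le_of_hasDerivAt_nonneg (f := fun y => y - tanh y)
    (fun y => ((hasDerivAt_id y).sub (hasDerivAt_tanh y)).congr_deriv (by ring))
    (fun y _ => sq_nonneg (tanh y)) hx
  simp only [tanh_zero, sub_zero] at h
  linarith

theorem sub_pow_three_div_three_le_tanh {x : ℝ} (hx : 0 ≤ x) : x - x ^ 3 / 3 ≤ tanh x := by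
  have h := apply_zero_le_of_hasDerivAt_nonneg (f := fun y => tanh y - y + y ^ 3 / 3)
    (f' := fun y => y ^ 2 - tanh y ^ 2)
    (fun y => (((hasDerivAt_tanh y).sub (hasDerivAt_id y)).add
      ((hasDerivAt_pow 3 y).div_const 3)).congr_deriv (by simp; ring))
    (fun y hy => by nlinarith [tanh_le_self hy.le, tanh_nonneg hy.le]) hx
  simp only [tanh_zero] at h
  linarith

theorem tanh_le_sub_pow_three_div_three_add {x : ℝ} (hx : 0 ≤ x) :
    tanh x ≤ x - x ^ 3 / 3 + 2 * x ^ 5 / 15 := by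
  have h := apply_zero_le_of_hasDerivAt_nonneg
    (f := fun y => y - y ^ 3 / 3 + 2 * y ^ 5 / 15 - tanh y)
    (f' := fun y => tanh y ^ 2 - y ^ 2 + 2 * y ^ 4 / 3)
    (fun y => ((((hasDerivAt_id y).sub ((hasDerivAt_pow 3 y).div_const 3)).add
      (((hasDerivAt_pow 5 y).const_mul 2).div_const 15)).sub (hasDerivAt_tanh y)).congr_deriv
        (by simp; ring))
    (fun y hy => by
      -- for `y² ≤ 3` square the cubic lower bound; otherwise `y² - 2y⁴/3 < 0`
      rcases le_or_gt (y ^ 2) 3 with hy3 | hy3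
      · have h0 : 0 ≤ y - y ^ 3 / 3 := by nlinarith
        nlinarith [sub_pow_three_div_three_le_tanh hy.le, pow_nonneg hy.le 6]
      · nlinarith [sq_nonneg (tanh y)]) hx
  simp only [tanh_zero] at h
  linarith

theorem strictAntiOn_tanh_div_self : StrictAntiOn (fun x => tanh x / x) (Ioi 0) := by
  refine strictAntiOn_of_hasDerivWithinAt_neg (convex_Ioi 0)
    (f' := fun x => ((1 - tanh x ^ 2) * x - tanh x * 1) / x ^ 2)
    (fun x hx => ((hasDerivAt_tanh x).div (hasDerivAt_id x) (ne_of_gt hx)).continuousAt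
      |>.continuousWithinAt) (fun x hx => ?_) (fun x hx => ?_)
  · rw [interior_Ioi] at hx
    exact ((hasDerivAt_tanh x).div (hasDerivAt_id x) (ne_of_gt hx)).hasDerivWithinAt
  · replace hx : 0 < x := by rwa [interior_Ioi] at hx
    have hc := cosh_pos x
    -- the numerator is `(x - sinh x cosh x) / cosh² x`, and `x < sinh x ≤ sinh x cosh x`
    have hsinh : x < sinh x := self_lt_sinh_iff.2 hx
    have hkey : x < sinh x * cosh x := by nlinarith [one_le_cosh x, sinh_pos_iff.2 hx]
    have hnum : (1 - tanh x ^ 2) * x - tanh x * 1 = (x - sinh x * cosh x) / cosh x ^ 2 := by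
      rw [tanh_eq_sinh_div_cosh]
      field_simp
      linear_combination x * cosh_sq_sub_sinh_sq x
    rw [hnum]
    exact div_neg_of_neg_of_pos (div_neg_of_neg_of_pos (by linarith) (by positivity))
      (by positivity)

end Real

section FixedPoint

variable {β u : ℝ}

theorem exists_pos_eq_mul_tanh (hβ : 1 < β) : ∃ u, 0 < u ∧ u = β * tanh u := by
  set g : ℝ → ℝ := fun u => β * tanh u - u
  -- `g > 0` near `0⁺` by the cubic lower bound for `tanh`, and `g β < 0` since `tanh < 1`
  set u₀ := √((β - 1) / β)
  have hβ0 : 0 < β := by linarith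
  have hu₀ : 0 < u₀ := sqrt_pos.2 (div_pos (by linarith) hβ0)
  have hu₀sq : β * u₀ ^ 2 = β - 1 := by
    rw [sq_sqrt (div_pos (by linarith) hβ0).le]
    field_simp
  have hu₀β : u₀ ≤ β := by nlinarith
  have hgu₀ : 0 ≤ g u₀ := by
    nlinarith [mul_le_mul_of_nonneg_left (sub_pow_three_div_three_le_tanh hu₀.le) hβ0.le]
  have hgβ : g β ≤ 0 := by nlinarith [tanh_lt_one β]
  obtain ⟨c, hc, hgc⟩ := intermediate_value_Icc' hu₀β
    ((continuous_const.mul continuous_tanh).sub continuous_id).continuousOn ⟨hgβ, hgu₀⟩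
  exact ⟨c, hu₀.trans_le hc.1, by change β * tanh c - c = 0 at hgc; linarith⟩

theorem tanh_div_self_eq_inv (hu : 0 < u) (h : u = β * tanh u) : tanh u / u = β⁻¹ := by
  have hβ : β ≠ 0 := by rintro rfl; rw [zero_mul] at h; exact hu.ne' h
  field_simp
  linear_combination -h

theorem existsUnique_pos_eq_mul_tanh (hβ : 1 < β) : ∃! u, 0 < u ∧ u = β * tanh u := by
  obtain ⟨u, hu, hu_eq⟩ := exists_pos_eq_mul_tanh hβ
  refine ⟨u, ⟨hu, hu_eq⟩, fun v ⟨hv, hv_eq⟩ => strictAntiOn_tanh_div_self.injOn hv hu ?_⟩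
  rw [tanh_div_self_eq_inv hv hv_eq, tanh_div_self_eq_inv hu hu_eq]

theorem three_mul_sub_one_le_mul_sq (hβ : 0 ≤ β) (hu : 0 < u) (h : u = β * tanh u) :
    3 * (β - 1) ≤ β * u ^ 2 := by
  nlinarith [mul_le_mul_of_nonneg_left (sub_pow_three_div_three_le_tanh hu.le) hβ]

theorem mul_sq_mul_le_sub_one (hβ : 0 ≤ β) (hu : 0 < u) (h : u = β * tanh u) :
    β * u ^ 2 * (1 / 3 - 2 * u ^ 2 / 15) ≤ β - 1 := by
  nlinarith [mul_le_mul_of_nonneg_left (tanh_le_sub_pow_three_div_three_add hu.le) hβ]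

theorem three_div_le_sq_div_sub_one (hβ : 1 < β) (hu : 0 < u) (h : u = β * tanh u) :
    3 / β ≤ u ^ 2 / (β - 1) := by
  rw [div_le_div_iff₀ (by linarith) (by linarith)]
  nlinarith [three_mul_sub_one_le_mul_sq (by linarith) hu h]

theorem sq_div_sub_one_le (hβ : 1 < β) (hβ' : β < 13 / 12) (hu : 0 < u)
    (h : u = β * tanh u) : u ^ 2 / (β - 1) ≤ 1 / (β * (1 / 3 - 4 * (β - 1))) := by
  have hbound := mul_sq_mul_le_sub_one (by linarith) hu h
  have huβ : u < β := by nlinarith [tanh_lt_one u]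
  -- `u < β < 3/2` makes the last factor of `hbound` at least `1/30`, so `u² ≤ 30 (β - 1)`
  have hfactor : 1 / 30 ≤ 1 / 3 - 2 * u ^ 2 / 15 := by nlinarith
  have hu_sq : u ^ 2 ≤ 30 * (β - 1) := by
    nlinarith [mul_le_mul_of_nonneg_left hfactor (by positivity : 0 ≤ β * u ^ 2)]
  rw [div_le_div_iff₀ (by linarith) (by nlinarith)]
  nlinarith [mul_le_mul_of_nonneg_left hu_sq (by positivity : 0 ≤ β * u ^ 2)]

theorem tendsto_sq_div_sub_one {U : ℝ → ℝ}
    (hU : ∀ β, 1 < β → 0 < U β ∧ U β = β * tanh (U β)) :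
    Tendsto (fun β => U β ^ 2 / (β - 1)) (𝓝[>] 1) (𝓝 3) := by
  have hlow : Tendsto (fun β : ℝ => 3 / β) (𝓝[>] 1) (𝓝 3) := by
    have : ContinuousAt (fun β : ℝ => 3 / β) 1 := by fun_prop (disch := norm_num)
    convert this.tendsto.mono_left nhdsWithin_le_nhds using 2
    norm_num
  have hhigh : Tendsto (fun β : ℝ => 1 / (β * (1 / 3 - 4 * (β - 1)))) (𝓝[>] 1) (𝓝 3) := by
    have : ContinuousAt (fun β : ℝ => 1 / (β * (1 / 3 - 4 * (β - 1)))) 1 := by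
      fun_prop (disch := norm_num)
    convert this.tendsto.mono_left nhdsWithin_le_nhds using 2
    norm_num
  have hnear : ∀ᶠ β in 𝓝[>] (1 : ℝ), β ∈ Ioo 1 (13 / 12) := Ioo_mem_nhdsGT (by norm_num)
  refine tendsto_of_tendsto_of_tendsto_of_le_of_le' hlow hhigh ?_ ?_ <;>
    filter_upwards [hnear] with β hβ
  · exact three_div_le_sq_div_sub_one hβ.1 (hU β hβ.1).1 (hU β hβ.1).2
  · exact sq_div_sub_one_le hβ.1 hβ.2 (hU β hβ.1).1 (hU β hβ.1).2

theorem eq_sqrt_mul_tanh_iff (hβ : 0 < β) {v : ℝ} :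
    v = √β * tanh (√β * v) ↔ √β * v = β * tanh (√β * v) := by
  rw [← mul_right_inj' (sqrt_pos.2 hβ).ne', ← mul_assoc, mul_self_sqrt hβ.le]

end FixedPoint

/-- For every `β > 1` there is a unique positive fixed point `v₊(β) = √β tanh(√β v₊(β))`,
and `v₊(β)/√(β−1) → √3` as `β → 1⁺`. -/
theorem stmt12 :
    (∀ β : ℝ, 1 < β →
      ∃! v : ℝ, 0 < v ∧ v = Real.sqrt β * Real.tanh (Real.sqrt β * v)) ∧
    ∀ V : ℝ → ℝ,
      (∀ β : ℝ, 1 < β → 0 < V β ∧ V β = Real.sqrt β * Real.tanh (Real.sqrt β * V β)) →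
      Filter.Tendsto (fun β => V β / Real.sqrt (β - 1)) (nhdsWithin 1 (Set.Ioi 1))
        (nhds (Real.sqrt 3)) := by
  refine ⟨fun β hβ => ?_, fun V hV => ?_⟩
  · have hβ0 : 0 < √β := sqrt_pos.2 (by linarith)
    obtain ⟨u, ⟨hu, hu_eq⟩, hu_unique⟩ := existsUnique_pos_eq_mul_tanh hβ
    refine ⟨u / √β, ⟨by positivity, ?_⟩, fun v ⟨hv, hv_eq⟩ => ?_⟩
    · rwa [eq_sqrt_mul_tanh_iff (by linarith), mul_div_cancel₀ _ hβ0.ne']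
    · rw [eq_div_iff hβ0.ne', mul_comm]
      exact hu_unique _ ⟨by positivity, (eq_sqrt_mul_tanh_iff (by linarith)).1 hv_eq⟩
  · have hU : ∀ β, 1 < β → 0 < √β * V β ∧ √β * V β = β * tanh (√β * V β) := fun β hβ =>
      ⟨mul_pos (sqrt_pos.2 (by linarith)) (hV β hβ).1,
        (eq_sqrt_mul_tanh_iff (by linarith)).1 (hV β hβ).2⟩
    have hsq : Tendsto (fun β => (√β * V β) ^ 2 / (β - 1) / β) (𝓝[>] 1) (𝓝 (3 / 1)) :=
      (tendsto_sq_div_sub_one hU).div (tendsto_id.mono_left nhdsWithin_le_nhds) one_ne_zero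
    rw [div_one] at hsq
    refine hsq.sqrt.congr' ?_
    filter_upwards [self_mem_nhdsWithin] with β (hβ : 1 < β)
    have hβ0 : β ≠ 0 := by linarith
    rw [mul_pow, sq_sqrt (by linarith), mul_div_assoc, mul_div_cancel_left₀ _ hβ0,
      sqrt_div' _ (by linarith), sqrt_sq (hV β hβ).1.le]
end

section
/- There exists an absolute constant C > 0 such that for every λ > 0 and every y ∈ ℝ, | ∫_ℝ exp( −(t − y)⁴/12 − λ·t²/2 ) dt − √(2π/λ) · exp(−y⁴/12) | ≤ C · λ^{−3/2}. -/
open MeasureTheory ProbabilityTheory Real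
open scoped NNReal

/-!
After the shift `t ↦ t + y`, the Gaussian factor is `√(2π/λ)` times the density of
`X ~ N(-y, 1/λ)`, so the integral equals `√(2π/λ) · E[w X]` with `w u = exp (-u⁴/12)`.
Since `w'` is Lipschitz with a constant `K` independent of `y`, Taylor's formula to first
order gives `|w x - w m - w' m (x - m)| ≤ K (x - m)²`; the linear term has mean zero at
`m = E X`, hence `|E[w X] - w (-y)| ≤ K Var X = K/λ`, and the factor `√(2π/λ)` turns this
into `λ^(-3/2)`.
-/

theorem abs_sub_sub_mul_sub_le_of_lipschitzWith_deriv {f f' : ℝ → ℝ} {K : ℝ≥0}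
    (hf : ∀ x, HasDerivAt f (f' x) x) (hf' : LipschitzWith K f') (a b : ℝ) :
    |f b - f a - f' a * (b - a)| ≤ K * (b - a) ^ 2 := by
  have hderiv : ∀ x ∈ Set.uIcc a b,
      HasDerivWithinAt (fun s => f s - f' a * s) (f' x - f' a) (Set.uIcc a b) x := fun x _ =>
    ((hf x).sub ((hasDerivAt_id x).const_mul (f' a))).hasDerivWithinAt.congr_deriv (by simp)
  have hbound : ∀ x ∈ Set.uIcc a b, ‖f' x - f' a‖ ≤ K * |b - a| := fun x hx =>
    calc ‖f' x - f' a‖ ≤ K * dist x a := hf'.dist_le_mul x a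
      _ ≤ K * |b - a| := by gcongr; exact Set.abs_sub_left_of_mem_uIcc hx
  have := (convex_uIcc a b).norm_image_sub_le_of_norm_hasDerivWithin_le hderiv hbound
    Set.left_mem_uIcc Set.right_mem_uIcc
  rw [Real.norm_eq_abs, Real.norm_eq_abs] at this
  calc |f b - f a - f' a * (b - a)| = |f b - f' a * b - (f a - f' a * a)| := by ring_nf
    _ ≤ K * |b - a| * |b - a| := this
    _ = K * (b - a) ^ 2 := by rw [mul_assoc, abs_mul_abs_self, sq]

theorem abs_integral_comp_sub_comp_integral_le_mul_variance {Ω : Type*}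
    {mΩ : MeasurableSpace Ω} {μ : Measure Ω} [IsProbabilityMeasure μ] {X : Ω → ℝ}
    (hX : MemLp X 2 μ) {f f' : ℝ → ℝ} {K : ℝ≥0} (hf : ∀ x, HasDerivAt f (f' x) x)
    (hf' : LipschitzWith K f') :
    |∫ ω, f (X ω) ∂μ - f μ[X]| ≤ K * Var[X; μ] := by
  set m := μ[X]
  have hXint : Integrable X μ := hX.integrable one_le_two
  have hXm : Integrable (fun ω => X ω - m) μ := hXint.sub (integrable_const m)
  have hXm_zero : ∫ ω, X ω - m ∂μ = 0 := by
    rw [integral_sub hXint (integrable_const m)]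
    simp [m]
  have hsq : Integrable (fun ω => (X ω - m) ^ 2) μ := (hX.sub (memLp_const m)).integrable_sq
  have hfc : Continuous f := continuous_iff_continuousAt.2 fun x => (hf x).continuousAt
  set r := fun ω => f (X ω) - f m - f' m * (X ω - m)
  have hr_le : ∀ ω, |r ω| ≤ K * (X ω - m) ^ 2 := fun ω =>
    abs_sub_sub_mul_sub_le_of_lipschitzWith_deriv hf hf' m (X ω)
  have hr : Integrable r μ := (hsq.const_mul K).mono'
    (((hfc.comp_aestronglyMeasurable hX.1).sub aestronglyMeasurable_const).sub
      (hXm.1.const_mul _)) (ae_of_all _ hr_le)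
  have haff : Integrable (fun ω => f m + f' m * (X ω - m)) μ :=
    (integrable_const _).add (hXm.const_mul _)
  have hfX : Integrable (fun ω => f (X ω)) μ :=
    (hr.add haff).congr (ae_of_all _ fun ω => by simp only [r, Pi.add_apply]; ring)
  have hr_eq : ∫ ω, r ω ∂μ = ∫ ω, f (X ω) ∂μ - f m := by
    simp only [r, sub_sub]
    rw [integral_sub hfX haff, integral_add (integrable_const _) (hXm.const_mul _),
      integral_const_mul, hXm_zero]
    simp
  rw [← hr_eq, variance_eq_integral hX.1.aemeasurable, ← integral_const_mul]
  exact abs_integral_le_integral_abs.trans (integral_mono hr.abs (hsq.const_mul _) hr_le)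

theorem abs_integral_gaussianReal_sub_le {f f' : ℝ → ℝ} {K : ℝ≥0}
    (hf : ∀ x, HasDerivAt f (f' x) x) (hf' : LipschitzWith K f') (m : ℝ) (v : ℝ≥0) :
    |∫ x, f x ∂gaussianReal m v - f m| ≤ K * v := by
  simpa [integral_id_gaussianReal, variance_id_gaussianReal] using
    abs_integral_comp_sub_comp_integral_le_mul_variance (memLp_id_gaussianReal 2) hf hf'

theorem integral_mul_exp_eq_sqrt_mul_integral_gaussianReal (g : ℝ → ℝ) (m : ℝ) {lam : ℝ}
    (hlam : 0 < lam) :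
    ∫ t, g t * exp (-lam * (t - m) ^ 2 / 2) =
      sqrt (2 * π / lam) * ∫ t, g t ∂gaussianReal m (lam⁻¹).toNNReal := by
  rw [integral_gaussianReal_eq_integral_smul (by simpa using hlam), ← integral_const_mul]
  congr 1 with t
  have hs : sqrt (2 * π / lam) ≠ 0 := by positivity
  rw [gaussianPDFReal, Real.coe_toNNReal _ (inv_nonneg.2 hlam.le), smul_eq_mul, ← div_eq_mul_inv,
    ← mul_assoc, ← mul_assoc, mul_inv_cancel₀ hs, one_mul, mul_comm]
  congr 2
  field_simp

noncomputable def quarticWeight (u : ℝ) : ℝ := exp (-u ^ 4 / 12)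

theorem hasDerivAt_quarticWeight (u : ℝ) :
    HasDerivAt quarticWeight (-(u ^ 3 / 3) * quarticWeight u) u := by
  refine ((hasDerivAt_pow 4 u).neg.div_const 12).exp.congr_deriv ?_
  simp only [quarticWeight, Pi.neg_apply]
  ring

theorem hasDerivAt_quarticWeight_deriv (u : ℝ) :
    HasDerivAt (fun u => -(u ^ 3 / 3) * quarticWeight u)
      ((u ^ 6 / 9 - u ^ 2) * quarticWeight u) u := by
  refine (((hasDerivAt_pow 3 u).div_const 3).neg.mul
    (hasDerivAt_quarticWeight u)).congr_deriv ?_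
  simp only [Pi.neg_apply]
  ring

theorem abs_sub_mul_quarticWeight_le (u : ℝ) :
    |(u ^ 6 / 9 - u ^ 2) * quarticWeight u| ≤ 290 := by
  have hx : 0 ≤ u ^ 4 / 12 := by positivity
  have hexp_ge_one : 1 ≤ exp (u ^ 4 / 12) := one_le_exp hx
  have hexp_ge_sq : u ^ 8 ≤ 288 * exp (u ^ 4 / 12) := by
    have := pow_div_factorial_le_exp _ hx 2
    norm_num [Nat.factorial] at this
    nlinarith
  have hpoly : |u ^ 6 / 9 - u ^ 2| ≤ 2 + u ^ 8 := by
    rw [abs_le]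
    constructor <;>
      nlinarith [sq_nonneg (u ^ 2 - 1), sq_nonneg (u ^ 4 - 1), sq_nonneg u, sq_nonneg (u ^ 3)]
  rw [abs_mul, quarticWeight, abs_of_pos (exp_pos _), show -u ^ 4 / 12 = -(u ^ 4 / 12) by ring,
    exp_neg, ← div_eq_mul_inv, div_le_iff₀ (exp_pos _)]
  linarith

theorem lipschitzWith_quarticWeight_deriv :
    LipschitzWith 290 (fun u => -(u ^ 3 / 3) * quarticWeight u) := by
  refine lipschitzWith_of_nnnorm_deriv_le
    (fun u => (hasDerivAt_quarticWeight_deriv u).differentiableAt) fun u => ?_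
  rw [(hasDerivAt_quarticWeight_deriv u).deriv, ← NNReal.coe_le_coe, coe_nnnorm,
    Real.norm_eq_abs]
  exact abs_sub_mul_quarticWeight_le u

/-- Uniform-in-`y` Laplace approximation of the convolution of the quartic weight with a
Gaussian of variance `1/λ`. -/
theorem stmt15 : ∃ C > 0, ∀ lam : ℝ, 0 < lam → ∀ y : ℝ,
    |(∫ t : ℝ, Real.exp (-(t - y) ^ 4 / 12 - lam * t ^ 2 / 2)) -
        Real.sqrt (2 * Real.pi / lam) * Real.exp (-y ^ 4 / 12)| ≤
      C * lam ^ (-(3 : ℝ) / 2) := by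
  refine ⟨290 * sqrt (2 * π), by positivity, fun lam hlam y => ?_⟩
  have hshift : ∫ t, exp (-(t - y) ^ 4 / 12 - lam * t ^ 2 / 2) =
      ∫ t, quarticWeight t * exp (-lam * (t - -y) ^ 2 / 2) := by
    rw [← integral_add_right_eq_self _ y]
    congr 1 with t
    rw [quarticWeight, ← exp_add]
    ring_nf
  have hy : exp (-y ^ 4 / 12) = quarticWeight (-y) := by
    rw [quarticWeight, Even.neg_pow (by decide)]
  have htaylor := abs_integral_gaussianReal_sub_le hasDerivAt_quarticWeight
    lipschitzWith_quarticWeight_deriv (-y) (lam⁻¹).toNNReal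
  rw [Real.coe_toNNReal _ (inv_nonneg.2 hlam.le)] at htaylor
  rw [hshift, integral_mul_exp_eq_sqrt_mul_integral_gaussianReal _ _ hlam, hy, ← mul_sub, abs_mul,
    abs_of_nonneg (sqrt_nonneg _)]
  calc sqrt (2 * π / lam) *
        |∫ t, quarticWeight t ∂gaussianReal (-y) (lam⁻¹).toNNReal - quarticWeight (-y)|
      ≤ sqrt (2 * π / lam) * (290 * lam⁻¹) := by gcongr; exact_mod_cast htaylor
    _ = 290 * sqrt (2 * π) * lam ^ (-(3 : ℝ) / 2) := by
      rw [show -(3 : ℝ) / 2 = -1 + -(1 / 2) by norm_num, rpow_add hlam, rpow_neg_one,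
        rpow_neg hlam.le, ← sqrt_eq_rpow, sqrt_div' _ hlam.le]
      ring
end
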